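/- Let A and B be C*-algebras and let J and K be closed ideals of A⊗̂B. Then: (a) if J ⊆ K then J_l ⊆ K_l and J^u ⊆ K^u; (b) if J_l or K_l has a bounded approximate identity, then (JK)_l = J_l K_l = J_l ∩ K_l = (J∩K)_l; (c) (J∩K)^u ⊆ J^u ∩ K^u, with equality if J = J^u and K = K^u. -/

import Mathlib

/-!
Common definitions for formalizing "Spectral synthesis for the operator space
projective tensor product of C*-algebras" (Jain–Kumar).
-/

noncomputable section

open scoped TensorProduct
open Topology Filter

/-- The operator norm of a (rectangular) complex scalar matrix, viewed as an operator
between the corresponding Euclidean (ℓ²) spaces. -/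
noncomputable def matOpNormC {m n : Type} [Fintype m] [Fintype n] (γ : Matrix m n ℂ) : ℝ :=
  sSup {r | ∃ x : n → ℂ, (∑ j, ‖x j‖ ^ 2) ≤ 1 ∧ r = Real.sqrt (∑ i, ‖∑ j, γ i j * x j‖ ^ 2)}

/-- An (abstract) operator space structure on a complex normed space `V`:
a family of matrix norms on the square matrix levels `Mₙ(V)` satisfying Ruan's axioms
and extending the norm of `V` at the first level. -/
structure OperatorSpaceStructure (V : Type) [NormedAddCommGroup V] [NormedSpace ℂ V] where
  matNorm : ∀ {p : ℕ}, Matrix (Fin p) (Fin p) V → ℝ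
  matNorm_one : ∀ v : Matrix (Fin 1) (Fin 1) V, matNorm v = ‖v 0 0‖
  matNorm_add_le : ∀ {p : ℕ} (v w : Matrix (Fin p) (Fin p) V),
    matNorm (v + w) ≤ matNorm v + matNorm w
  matNorm_smul : ∀ {p : ℕ} (c : ℂ) (v : Matrix (Fin p) (Fin p) V),
    matNorm (c • v) = ‖c‖ * matNorm v
  matNorm_eq_zero_iff : ∀ {p : ℕ} (v : Matrix (Fin p) (Fin p) V), matNorm v = 0 ↔ v = 0
  /-- Ruan's axiom: `‖γ v δ‖ ≤ ‖γ‖ ‖v‖ ‖δ‖` for scalar matrices `γ, δ`. -/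
  matNorm_comp_le : ∀ {p q : ℕ} (γ : Matrix (Fin q) (Fin p) ℂ) (v : Matrix (Fin p) (Fin p) V)
    (δ : Matrix (Fin p) (Fin q) ℂ),
    matNorm (Matrix.of fun i j => ∑ k, ∑ l, (γ i k * δ l j) • v k l) ≤
      matOpNormC γ * matNorm v * matOpNormC δ
  /-- Ruan's axiom: the norm of a direct sum is the maximum of the norms. -/
  matNorm_dirSum : ∀ {p q : ℕ} (v : Matrix (Fin p) (Fin p) V) (w : Matrix (Fin q) (Fin q) V),
    matNorm (Matrix.reindex finSumFinEquiv finSumFinEquiv (Matrix.fromBlocks v 0 0 w)) =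
      max (matNorm v) (matNorm w)

/-- The operator space projective tensor norm `‖u‖_∧` of `u ∈ V ⊗ W`, with respect to
given operator space structures on `V` and `W`:
`‖u‖_∧ = inf {‖α‖‖v‖‖w‖‖β‖ : u = α (v ⊗ w) β}`, where `α ∈ M_{1,pq}(ℂ)`,
`v ∈ M_p(V)`, `w ∈ M_q(W)`, `β ∈ M_{pq,1}(ℂ)`. -/
noncomputable def osProjNorm {V W : Type} [NormedAddCommGroup V] [NormedSpace ℂ V]
    [NormedAddCommGroup W] [NormedSpace ℂ W]
    (osV : OperatorSpaceStructure V) (osW : OperatorSpaceStructure W) (u : V ⊗[ℂ] W) : ℝ :=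
  sInf {r | ∃ (p q : ℕ) (α : Matrix (Fin 1) (Fin p × Fin q) ℂ) (v : Matrix (Fin p) (Fin p) V)
    (w : Matrix (Fin q) (Fin q) W) (β : Matrix (Fin p × Fin q) (Fin 1) ℂ),
    u = ∑ i, ∑ j, ∑ k, ∑ l, (α 0 (i, k) * β (j, l) 0) • (v i j ⊗ₜ[ℂ] w k l) ∧
    r = matOpNormC α * osV.matNorm v * osW.matNorm w * matOpNormC β}

section StarReps

/-- A `*`-homomorphism of a complex `*`-algebra on some Hilbert space (no contractivity
required). -/
structure StarHomOn (W : Type) [NonUnitalNonAssocSemiring W] [Module ℂ W] [Star W] where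
  carrier : Type
  [normedAddCommGroup : NormedAddCommGroup carrier]
  [innerProductSpace : InnerProductSpace ℂ carrier]
  [completeSpace : CompleteSpace carrier]
  hom : W →⋆ₙₐ[ℂ] (carrier →L[ℂ] carrier)

attribute [instance] StarHomOn.normedAddCommGroup StarHomOn.innerProductSpace
  StarHomOn.completeSpace

/-- A `*`-representation of a Banach `*`-algebra on some Hilbert space: a contractive
`*`-homomorphism into the bounded operators. -/
structure StarRepOn (X : Type) [NonUnitalNonAssocSemiring X] [Module ℂ X] [Star X] [Norm X] where
  carrier : Type
  [normedAddCommGroup : NormedAddCommGroup carrier]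
  [innerProductSpace : InnerProductSpace ℂ carrier]
  [completeSpace : CompleteSpace carrier]
  hom : X →⋆ₙₐ[ℂ] (carrier →L[ℂ] carrier)
  contractive : ∀ x, ‖hom x‖ ≤ ‖x‖

attribute [instance] StarRepOn.normedAddCommGroup StarRepOn.innerProductSpace
  StarRepOn.completeSpace

/-- Topological irreducibility of a `*`-representation: it is nonzero and the only closed
invariant subspaces are `⊥` and `⊤`. -/
def StarRepOn.IsIrreducible {X : Type} [NonUnitalNonAssocSemiring X] [Module ℂ X] [Star X]
    [Norm X] (ρ : StarRepOn X) : Prop :=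
  (∃ x, ρ.hom x ≠ 0) ∧
    ∀ U : Submodule ℂ ρ.carrier, IsClosed (U : Set ρ.carrier) →
      (∀ x : X, ∀ v ∈ U, ρ.hom x v ∈ U) → U = ⊥ ∨ U = ⊤

end StarReps

section BanachStar

variable (X : Type) [NonUnitalNormedRing X] [StarRing X] [NormedSpace ℂ X]

/-- A closed two-sided ideal of `X`. -/
def IsClosedIdeal (I : Submodule ℂ X) : Prop :=
  IsClosed (I : Set X) ∧ (∀ x : X, ∀ y ∈ I, x * y ∈ I) ∧ (∀ x : X, ∀ y ∈ I, y * x ∈ I)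

/-- A `*`-ideal: an ideal closed under the involution. -/
def IsStarIdeal (I : Submodule ℂ X) : Prop := ∀ x ∈ I, star x ∈ I

/-- A primitive ideal of `X`: the kernel of an irreducible `*`-representation of `X` on a
Hilbert space. -/
def IsPrimitiveIdeal (P : Submodule ℂ X) : Prop :=
  ∃ ρ : StarRepOn X, ρ.IsIrreducible ∧ (P : Set X) = {x | ρ.hom x = 0}

/-- The hull of a subset `M` of `X`: all primitive ideals containing `M`. -/
def hullOf (M : Set X) : Set (Submodule ℂ X) := {P | IsPrimitiveIdeal X P ∧ M ⊆ (P : Set X)}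

/-- The kernel of a collection of ideals: their intersection. -/
def kernelOf (E : Set (Submodule ℂ X)) : Submodule ℂ X := sInf E

/-- A set of primitive ideals which is closed in the hull-kernel topology:
`E = h(k(E))`. -/
def IsHkClosed (E : Set (Submodule ℂ X)) : Prop :=
  (∀ P ∈ E, IsPrimitiveIdeal X P) ∧ hullOf X (kernelOf X E : Set X) = E

/-- A (closed) subset `E` of `Prim(X)` is spectral if `k(E)` is the only closed ideal of `X`
whose hull equals `E`. -/
def IsSpectralSet (E : Set (Submodule ℂ X)) : Prop :=
  ∀ J : Submodule ℂ X, IsClosedIdeal X J → hullOf X (J : Set X) = E → J = kernelOf X E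

/-- `X` has spectral synthesis if every hull-kernel closed subset of `Prim(X)` is spectral. -/
def HasSpectralSynthesis : Prop :=
  ∀ E : Set (Submodule ℂ X), IsHkClosed X E → IsSpectralSet X E

/-- The Wiener property: every proper closed two-sided ideal of `X` is annihilated by some
irreducible `*`-representation, i.e. is contained in a primitive ideal. -/
def WienerProperty : Prop :=
  ∀ I : Submodule ℂ X, IsClosedIdeal X I → I ≠ ⊤ → ∃ P, IsPrimitiveIdeal X P ∧ I ≤ P

/-- The topology `τ_w` on the collection of ideals of `X`, generated by the sub-basic open
sets `Z_J = {I : I ⊉ J}` for closed ideals `J`. -/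
def tauW : TopologicalSpace (Submodule ℂ X) :=
  .generateFrom {S | ∃ J : Submodule ℂ X, IsClosedIdeal X J ∧ S = {I | ¬ J ≤ I}}

/-- A (two-sided) bounded approximate identity for an ideal `J` of `X`. -/
def HasBoundedApproxIdentity (J : Submodule ℂ X) : Prop :=
  ∃ (ι : Type) (l : Filter ι) (e : ι → X) (C : ℝ), l.NeBot ∧ (∀ i, e i ∈ J ∧ ‖e i‖ ≤ C) ∧
    ∀ y ∈ J, Filter.Tendsto (fun i => e i * y) l (nhds y) ∧
      Filter.Tendsto (fun i => y * e i) l (nhds y)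

/-- A closed prime ideal of `X`: a proper closed ideal `P` such that `I·J ⊆ P` implies
`I ⊆ P` or `J ⊆ P` for closed ideals `I`, `J`. -/
def IsPrimeIdeal (P : Submodule ℂ X) : Prop :=
  IsClosedIdeal X P ∧ P ≠ ⊤ ∧
    ∀ I J : Submodule ℂ X, IsClosedIdeal X I → IsClosedIdeal X J →
      (∀ x ∈ I, ∀ y ∈ J, x * y ∈ P) → I ≤ P ∨ J ≤ P

/-- The closed ideal generated by products of elements of `J` and `K`. -/
def mulIdeal (J K : Submodule ℂ X) : Submodule ℂ X :=
  (Submodule.span ℂ {z : X | ∃ x ∈ J, ∃ y ∈ K, z = x * y}).topologicalClosure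

end BanachStar

section Models

variable (X : Type) [NonUnitalNormedRing X] [StarRing X] [NormedSpace ℂ X]

/-- A realization of a closed `*`-ideal `J` of `X` as a Banach `*`-algebra `Y`:
an isometric `*`-isomorphism of `Y` onto `J`. -/
structure SubalgebraModel (J : Submodule ℂ X) (Y : Type) [NonUnitalNormedRing Y] [StarRing Y]
    [NormedSpace ℂ Y] where
  incl : Y →⋆ₙₐ[ℂ] X
  isometric : ∀ y, ‖incl y‖ = ‖y‖
  range_eq : Set.range incl = (J : Set X)

/-- A realization of the quotient Banach `*`-algebra `X/J`: a surjective `*`-homomorphism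
with kernel `J`, carrying the quotient norm. -/
structure QuotientModel (J : Submodule ℂ X) (Z : Type) [NonUnitalNormedRing Z] [StarRing Z]
    [NormedSpace ℂ Z] where
  proj : X →⋆ₙₐ[ℂ] Z
  surjective : Function.Surjective proj
  ker_eq : ∀ x, proj x = 0 ↔ x ∈ J
  norm_eq : ∀ x, ‖proj x‖ = Metric.infDist x (J : Set X)

end Models

section CStarTensor

/-- The canonical C*-norm on square matrices over a C*-algebra `A`, described as the
supremum of `‖π v‖` over all `*`-homomorphisms `π` of `M_p(A)` on Hilbert spaces. -/
noncomputable def matCStarNorm {A : Type} [NonUnitalCStarAlgebra A] {p : ℕ}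
    (v : Matrix (Fin p) (Fin p) A) : ℝ :=
  sSup {r | ∃ ρ : StarHomOn (Matrix (Fin p) (Fin p) A), r = ‖ρ.hom v‖}

/-- The operator space projective tensor norm `‖·‖_∧` on the algebraic tensor product
`A ⊗ B` of two C*-algebras. -/
noncomputable def projTensorNorm (A B : Type) [NonUnitalCStarAlgebra A] [NonUnitalCStarAlgebra B]
    (u : A ⊗[ℂ] B) : ℝ :=
  sInf {r | ∃ (p q : ℕ) (α : Matrix (Fin 1) (Fin p × Fin q) ℂ) (v : Matrix (Fin p) (Fin p) A)
    (w : Matrix (Fin q) (Fin q) B) (β : Matrix (Fin p × Fin q) (Fin 1) ℂ),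
    u = ∑ i, ∑ j, ∑ k, ∑ l, (α 0 (i, k) * β (j, l) 0) • (v i j ⊗ₜ[ℂ] w k l) ∧
    r = matOpNormC α * matCStarNorm v * matCStarNorm w * matOpNormC β}

/-- A realization of the operator space projective tensor product `A ⊗̂ B` of two
C*-algebras: a Banach `*`-algebra `X` containing `A ⊗ B` isometrically (for `‖·‖_∧`) and
densely, with multiplication and involution induced by the natural ones. -/
structure OSProjTensorProduct (A B : Type) [NonUnitalCStarAlgebra A] [NonUnitalCStarAlgebra B]
    (X : Type) [NonUnitalNormedRing X] [StarRing X] [NormedSpace ℂ X] [CompleteSpace X] where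
  emb : (A ⊗[ℂ] B) →ₗ[ℂ] X
  norm_emb : ∀ u, ‖emb u‖ = projTensorNorm A B u
  dense_range : DenseRange fun u => emb u
  mul_emb : ∀ (a c : A) (b d : B),
    emb (a ⊗ₜ[ℂ] b) * emb (c ⊗ₜ[ℂ] d) = emb ((a * c) ⊗ₜ[ℂ] (b * d))
  star_emb : ∀ (a : A) (b : B), star (emb (a ⊗ₜ[ℂ] b)) = emb (star a ⊗ₜ[ℂ] star b)

/-- A realization of a C*-tensor norm completion of `A ⊗ B`: a C*-algebra `Y` containing
`A ⊗ B` injectively and densely, with the natural multiplication and involution. -/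
structure CStarTensorRealization (A B : Type) [NonUnitalCStarAlgebra A] [NonUnitalCStarAlgebra B]
    (Y : Type) [NonUnitalCStarAlgebra Y] where
  emb : (A ⊗[ℂ] B) →ₗ[ℂ] Y
  injective : Function.Injective emb
  dense_range : DenseRange fun u => emb u
  mul_emb : ∀ (a c : A) (b d : B),
    emb (a ⊗ₜ[ℂ] b) * emb (c ⊗ₜ[ℂ] d) = emb ((a * c) ⊗ₜ[ℂ] (b * d))
  star_emb : ∀ (a : A) (b : B), star (emb (a ⊗ₜ[ℂ] b)) = emb (star a ⊗ₜ[ℂ] star b)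

/-- A realization of the minimal (spatial) C*-tensor product `A ⊗_min B`: a C*-tensor norm
completion of `A ⊗ B` whose norm is minimal among all C*-tensor norms on `A ⊗ B`. -/
structure MinTensorProduct (A B : Type) [NonUnitalCStarAlgebra A] [NonUnitalCStarAlgebra B]
    (Y : Type) [NonUnitalCStarAlgebra Y] extends CStarTensorRealization A B Y where
  norm_min : ∀ (Z : Type) [NonUnitalCStarAlgebra Z] (r : CStarTensorRealization A B Z)
    (u : A ⊗[ℂ] B), ‖emb u‖ ≤ ‖r.emb u‖

variable {A B : Type} [NonUnitalCStarAlgebra A] [NonUnitalCStarAlgebra B]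
variable {X : Type} [NonUnitalNormedRing X] [StarRing X] [NormedSpace ℂ X] [CompleteSpace X]
variable {Y : Type} [NonUnitalCStarAlgebra Y]

/-- The product ideal `M ⊗̂ N`: the closure in `A ⊗̂ B` of the span of elementary tensors
`a ⊗ b` with `a ∈ M`, `b ∈ N`. -/
noncomputable def prodIdeal (P : OSProjTensorProduct A B X) (M : Submodule ℂ A)
    (N : Submodule ℂ B) : Submodule ℂ X :=
  (Submodule.span ℂ {x : X | ∃ a ∈ M, ∃ b ∈ N, x = P.emb (a ⊗ₜ[ℂ] b)}).topologicalClosure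

/-- The closed ideal `Φ(M, N) = A ⊗̂ N + M ⊗̂ B` of `A ⊗̂ B`. -/
noncomputable def PhiIdeal (P : OSProjTensorProduct A B X) (M : Submodule ℂ A)
    (N : Submodule ℂ B) : Submodule ℂ X :=
  (prodIdeal P ⊤ N ⊔ prodIdeal P M ⊤).topologicalClosure

/-- The lower ideal `J_l` associated with a closed ideal `J` of `A ⊗̂ B`: the closure of the
span of all elementary tensors belonging to `J`. -/
noncomputable def lowerIdeal (P : OSProjTensorProduct A B X) (J : Submodule ℂ X) :
    Submodule ℂ X :=
  (Submodule.span ℂ {x : X | x ∈ J ∧ ∃ (a : A) (b : B), x = P.emb (a ⊗ₜ[ℂ] b)}).topologicalClosure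

/-- The upper ideal `J^u = J_min ∩ (A ⊗̂ B)` associated with a closed ideal `J` of `A ⊗̂ B`,
where `i : A ⊗̂ B → A ⊗_min B` is the canonical inclusion and `J_min` is the closure of
`i(J)` in `A ⊗_min B`. -/
noncomputable def upperIdeal (i : X →L[ℂ] Y) (J : Submodule ℂ X) : Submodule ℂ X :=
  Submodule.comap (i.toLinearMap) ((Submodule.map (i.toLinearMap) J).topologicalClosure)

/-- `i : X → Y` is the canonical `*`-homomorphism `A ⊗̂ B → A ⊗_min B` for the given
realizations: the continuous map which is the identity on the algebraic tensor product. -/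
def IsCanonicalInclusion (P : OSProjTensorProduct A B X) (Mn : MinTensorProduct A B Y)
    (i : X →L[ℂ] Y) : Prop :=
  ∀ u : A ⊗[ℂ] B, i (P.emb u) = Mn.emb u

/-- A closed ideal `J` of `A ⊗̂ B` is spectral if `J_l = J = J^u`. -/
def IsSpectralIdeal (P : OSProjTensorProduct A B X) (i : X →L[ℂ] Y) (J : Submodule ℂ X) :
    Prop :=
  lowerIdeal P J = J ∧ upperIdeal i J = J

/-- The product ideal `M ⊗_min N` inside a realization of `A ⊗_min B`. -/
noncomputable def minProdIdeal (Mn : MinTensorProduct A B Y) (M : Submodule ℂ A)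
    (N : Submodule ℂ B) : Submodule ℂ Y :=
  (Submodule.span ℂ {y : Y | ∃ a ∈ M, ∃ b ∈ N, y = Mn.emb (a ⊗ₜ[ℂ] b)}).topologicalClosure

/-- A realization of the quotient of a C*-algebra `A` by a closed ideal `M`: a surjective
`*`-homomorphism with kernel `M` (for C*-algebras, such a map automatically carries the
quotient norm). -/
structure CStarQuotientModel (A : Type) [NonUnitalCStarAlgebra A] (M : Submodule ℂ A)
    (A' : Type) [NonUnitalCStarAlgebra A'] where
  proj : A →⋆ₙₐ[ℂ] A'
  surjective : Function.Surjective proj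
  ker_eq : ∀ a, proj a = 0 ↔ a ∈ M

end CStarTensor

/-- A realization of the Banach `*`-algebra `A ⊗̂_r A`: the operator space projective tensor
product `A ⊗̂ A` equipped with the reverse involution `(a ⊗ b)* = b* ⊗ a*`. -/
structure OSProjTensorSquareRev (A : Type) [NonUnitalCStarAlgebra A]
    (X : Type) [NonUnitalNormedRing X] [StarRing X] [NormedSpace ℂ X] [CompleteSpace X] where
  emb : (A ⊗[ℂ] A) →ₗ[ℂ] X
  norm_emb : ∀ u, ‖emb u‖ = projTensorNorm A A u
  dense_range : DenseRange fun u => emb u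
  mul_emb : ∀ a b c d : A,
    emb (a ⊗ₜ[ℂ] b) * emb (c ⊗ₜ[ℂ] d) = emb ((a * c) ⊗ₜ[ℂ] (b * d))
  star_emb : ∀ a b : A, star (emb (a ⊗ₜ[ℂ] b)) = emb (star b ⊗ₜ[ℂ] star a)

end

open scoped TensorProduct

/-!
Products of elementary tensors are elementary tensors, so if `J · K ⊆ L` then products of the
generators of `J_l` and `K_l` are generators of `L_l`, and by continuity of multiplication
`J_l K_l ⊆ L_l`. Taking `K = A ⊗̂ B`, whose elementary tensors span a dense subspace, shows that
`J_l` is a closed ideal, so `J_l K_l ⊆ J_l ∩ K_l`; conversely a bounded approximate identity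
`(e_k)` of `J_l` writes `z ∈ J_l ∩ K_l` as `lim e_k z ∈ J_l K_l`. The two choices `L = J K` and
`L = J ∩ K` then close the cycle of inclusions in (b). Part (c) only uses that `J ↦ J^u` is
monotone and inflationary.
-/

section TopologicalClosureSpan

variable {R M : Type*} [CommSemiring R] [NonUnitalNonAssocSemiring M] [Module R M]
  [SMulCommClass R M M] [IsScalarTower R M M] [TopologicalSpace M] [ContinuousAdd M]
  [ContinuousMul M] [ContinuousConstSMul R M]

theorem mul_mem_of_mem_topologicalClosure_span {S T : Set M} {U : Submodule R M}
    (hU : IsClosed (U : Set M)) (h : ∀ x ∈ S, ∀ y ∈ T, x * y ∈ U) {x y : M}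
    (hx : x ∈ (Submodule.span R S).topologicalClosure)
    (hy : y ∈ (Submodule.span R T).topologicalClosure) : x * y ∈ U := by
  have hspan :
      Submodule.map₂ (LinearMap.mul R M) (Submodule.span R S) (Submodule.span R T) ≤ U := by
    rw [Submodule.map₂_span_span, Submodule.span_le]
    rintro _ ⟨x, hx, y, hy, rfl⟩
    exact h x hx y hy
  exact hU.closure_subset
    (map_mem_closure₂ continuous_mul hx hy fun x hx y hy => Submodule.map₂_le.1 hspan x hx y hy)

end TopologicalClosureSpan

section MulIdeal

variable {X : Type} [NonUnitalNormedRing X] [NormedSpace ℂ X] {J K L : Submodule ℂ X}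

theorem mul_mem_mulIdeal {x y : X} (hx : x ∈ J) (hy : y ∈ K) : x * y ∈ mulIdeal X J K :=
  Submodule.le_topologicalClosure _ (Submodule.subset_span ⟨x, hx, y, hy, rfl⟩)

theorem mulIdeal_le (hL : IsClosed (L : Set X)) (h : ∀ x ∈ J, ∀ y ∈ K, x * y ∈ L) :
    mulIdeal X J K ≤ L := by
  refine Submodule.topologicalClosure_minimal _ (Submodule.span_le.2 ?_) hL
  rintro _ ⟨x, hx, y, hy, rfl⟩
  exact h x hx y hy

theorem mulIdeal_le_inf (hJ : IsClosedIdeal X J) (hK : IsClosedIdeal X K) :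
    mulIdeal X J K ≤ J ⊓ K :=
  mulIdeal_le (hJ.1.inter hK.1) fun x hx y hy => ⟨hJ.2.2 y x hx, hK.2.1 x y hy⟩

theorem inf_le_mulIdeal
    (h : HasBoundedApproxIdentity X J ∨ HasBoundedApproxIdentity X K) :
    J ⊓ K ≤ mulIdeal X J K := by
  rintro z ⟨hzJ, hzK⟩
  have hclosed : IsClosed (mulIdeal X J K : Set X) := Submodule.isClosed_topologicalClosure _
  rcases h with ⟨_, _, e, _, hl, he, happrox⟩ | ⟨_, _, e, _, hl, he, happrox⟩
  · exact hclosed.mem_of_tendsto (happrox z hzJ).1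
      (.of_forall fun k => mul_mem_mulIdeal (he k).1 hzK)
  · exact hclosed.mem_of_tendsto (happrox z hzK).2
      (.of_forall fun k => mul_mem_mulIdeal hzJ (he k).1)

end MulIdeal

section LowerIdeal

variable {A B : Type} [NonUnitalCStarAlgebra A] [NonUnitalCStarAlgebra B]
  {X : Type} [NonUnitalNormedRing X] [StarRing X] [NormedSpace ℂ X] [CompleteSpace X]
  (P : OSProjTensorProduct A B X) {J K L : Submodule ℂ X}

theorem lowerIdeal_mono : Monotone (lowerIdeal P) := fun _ _ h =>
  Submodule.topologicalClosure_mono (Submodule.span_mono fun _ hx => ⟨h hx.1, hx.2⟩)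

theorem lowerIdeal_top : lowerIdeal P ⊤ = ⊤ := by
  have hspan : Submodule.span ℂ {x : X | x ∈ (⊤ : Submodule ℂ X) ∧
      ∃ (a : A) (b : B), x = P.emb (a ⊗ₜ[ℂ] b)} = LinearMap.range P.emb := by
    rw [LinearMap.range_eq_map, ← TensorProduct.span_tmul_eq_top, Submodule.map_span]
    congr 1
    ext x
    simp [eq_comm]
  rw [lowerIdeal, hspan, ← Submodule.dense_iff_topologicalClosure_eq_top]
  exact P.dense_range

variable [IsScalarTower ℂ X X] [SMulCommClass ℂ X X]

theorem mul_mem_lowerIdeal (h : ∀ x ∈ J, ∀ y ∈ K, x * y ∈ L) {x y : X}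
    (hx : x ∈ lowerIdeal P J) (hy : y ∈ lowerIdeal P K) : x * y ∈ lowerIdeal P L := by
  refine mul_mem_of_mem_topologicalClosure_span
    (Submodule.isClosed_topologicalClosure _) ?_ hx hy
  rintro _ ⟨hxJ, a, b, rfl⟩ _ ⟨hyK, c, d, rfl⟩
  have hL := h _ hxJ _ hyK
  rw [P.mul_emb] at hL ⊢
  exact Submodule.le_topologicalClosure _ (Submodule.subset_span ⟨hL, _, _, rfl⟩)

theorem mulIdeal_lowerIdeal_le (h : ∀ x ∈ J, ∀ y ∈ K, x * y ∈ L) :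
    mulIdeal X (lowerIdeal P J) (lowerIdeal P K) ≤ lowerIdeal P L :=
  mulIdeal_le (Submodule.isClosed_topologicalClosure _) fun _ hx _ hy =>
    mul_mem_lowerIdeal P h hx hy

theorem isClosedIdeal_lowerIdeal (hJ : IsClosedIdeal X J) :
    IsClosedIdeal X (lowerIdeal P J) := by
  have hmem_top : ∀ x : X, x ∈ lowerIdeal P ⊤ := fun x =>
    (lowerIdeal_top P).symm ▸ Submodule.mem_top
  exact ⟨Submodule.isClosed_topologicalClosure _,
    fun x _ hy => mul_mem_lowerIdeal P (fun x _ => hJ.2.1 x) (hmem_top x) hy,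
    fun x _ hy => mul_mem_lowerIdeal P (fun y hy x _ => hJ.2.2 x y hy) hy (hmem_top x)⟩

end LowerIdeal

section UpperIdeal

variable {X Y : Type} [NonUnitalNormedRing X] [NormedSpace ℂ X] [NonUnitalCStarAlgebra Y]
  (i : X →L[ℂ] Y)

theorem upperIdeal_mono : Monotone (upperIdeal i) := fun _ _ h =>
  Submodule.comap_mono (Submodule.topologicalClosure_mono (Submodule.map_mono h))

theorem le_upperIdeal (J : Submodule ℂ X) : J ≤ upperIdeal i J := fun _ hx =>
  Submodule.le_topologicalClosure _ (Submodule.mem_map_of_mem hx)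

end UpperIdeal

theorem lower_upper_ideal_properties_general
    (A B : Type) [NonUnitalCStarAlgebra A] [NonUnitalCStarAlgebra B]
    (X : Type) [NonUnitalNormedRing X] [StarRing X] [NormedSpace ℂ X] [CompleteSpace X]
    [IsScalarTower ℂ X X] [SMulCommClass ℂ X X]
    (Y : Type) [NonUnitalCStarAlgebra Y]
    (P : OSProjTensorProduct A B X)
    (i : X →L[ℂ] Y)
    (J K : Submodule ℂ X) (hJ : IsClosedIdeal X J) (hK : IsClosedIdeal X K) :
    (J ≤ K → lowerIdeal P J ≤ lowerIdeal P K ∧ upperIdeal i J ≤ upperIdeal i K) ∧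
      ((HasBoundedApproxIdentity X (lowerIdeal P J) ∨
          HasBoundedApproxIdentity X (lowerIdeal P K)) →
        lowerIdeal P (mulIdeal X J K) = mulIdeal X (lowerIdeal P J) (lowerIdeal P K) ∧
          mulIdeal X (lowerIdeal P J) (lowerIdeal P K) = lowerIdeal P J ⊓ lowerIdeal P K ∧
          lowerIdeal P J ⊓ lowerIdeal P K = lowerIdeal P (J ⊓ K)) ∧
      (upperIdeal i (J ⊓ K) ≤ upperIdeal i J ⊓ upperIdeal i K ∧
        (J = upperIdeal i J → K = upperIdeal i K →
          upperIdeal i (J ⊓ K) = upperIdeal i J ⊓ upperIdeal i K)) := by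
  refine ⟨fun h => ⟨lowerIdeal_mono P h, upperIdeal_mono i h⟩, fun hBAI => ?_,
    (upperIdeal_mono i).map_inf_le J K, fun hJu hKu => ?_⟩
  · have h_inf :
        lowerIdeal P J ⊓ lowerIdeal P K = mulIdeal X (lowerIdeal P J) (lowerIdeal P K) :=
      le_antisymm (inf_le_mulIdeal hBAI)
        (mulIdeal_le_inf (isClosedIdeal_lowerIdeal P hJ) (isClosedIdeal_lowerIdeal P hK))
    have h_le_lower_inf : mulIdeal X (lowerIdeal P J) (lowerIdeal P K) ≤ lowerIdeal P (J ⊓ K) :=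
      mulIdeal_lowerIdeal_le P fun x hx y hy => ⟨hJ.2.2 y x hx, hK.2.1 x y hy⟩
    have h_le_lower_mul :
        mulIdeal X (lowerIdeal P J) (lowerIdeal P K) ≤ lowerIdeal P (mulIdeal X J K) :=
      mulIdeal_lowerIdeal_le P fun _ hx _ hy => mul_mem_mulIdeal hx hy
    have h_lower_inf_le : lowerIdeal P (J ⊓ K) ≤ lowerIdeal P J ⊓ lowerIdeal P K :=
      (lowerIdeal_mono P).map_inf_le J K
    have h_lower_mul_le : lowerIdeal P (mulIdeal X J K) ≤ lowerIdeal P (J ⊓ K) :=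
      lowerIdeal_mono P (mulIdeal_le_inf hJ hK)
    exact ⟨le_antisymm (h_lower_mul_le.trans (h_lower_inf_le.trans h_inf.le)) h_le_lower_mul,
      h_inf.symm, le_antisymm (h_inf.le.trans h_le_lower_inf) h_lower_inf_le⟩
  · refine le_antisymm ((upperIdeal_mono i).map_inf_le J K) ?_
    rw [← hJu, ← hKu]
    exact le_upperIdeal i _

theorem lower_upper_ideal_properties
    (A B : Type) [NonUnitalCStarAlgebra A] [NonUnitalCStarAlgebra B]
    (X : Type) [NonUnitalNormedRing X] [StarRing X] [NormedSpace ℂ X] [CompleteSpace X]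
    [IsScalarTower ℂ X X] [SMulCommClass ℂ X X] [StarModule ℂ X] [NormedStarGroup X]
    (Y : Type) [NonUnitalCStarAlgebra Y]
    (P : OSProjTensorProduct A B X) (Mn : MinTensorProduct A B Y)
    (i : X →L[ℂ] Y) (hi : IsCanonicalInclusion P Mn i)
    (J K : Submodule ℂ X) (hJ : IsClosedIdeal X J) (hK : IsClosedIdeal X K) :
    (J ≤ K → lowerIdeal P J ≤ lowerIdeal P K ∧ upperIdeal i J ≤ upperIdeal i K) ∧
      ((HasBoundedApproxIdentity X (lowerIdeal P J) ∨
          HasBoundedApproxIdentity X (lowerIdeal P K)) →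
        lowerIdeal P (mulIdeal X J K) = mulIdeal X (lowerIdeal P J) (lowerIdeal P K) ∧
          mulIdeal X (lowerIdeal P J) (lowerIdeal P K) = lowerIdeal P J ⊓ lowerIdeal P K ∧
          lowerIdeal P J ⊓ lowerIdeal P K = lowerIdeal P (J ⊓ K)) ∧
      (upperIdeal i (J ⊓ K) ≤ upperIdeal i J ⊓ upperIdeal i K ∧
        (J = upperIdeal i J → K = upperIdeal i K →
          upperIdeal i (J ⊓ K) = upperIdeal i J ⊓ upperIdeal i K)) :=
  lower_upper_ideal_properties_general A B X Y P i J K hJ hK
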